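/- arXiv:1809.02294 — 7 statements merged into one kernel-verified Lean document; each statement's English description precedes it below -/
import Mathlib

section
/- Let 0 < p < 1. Then p·log 3/(4−p) ≤ E[log X] ≤ p·log 3/2, where X is a positive random variable whose law is the invariant distribution of the Bernoulli(p) random Fibonacci matrix model, characterized by the distributional identity X ~ 1/X + ε. -/
/-!
Testing the identity `X ~ 1/X + ε` against `log`, `log (1 + ·)` and the negative part of `log`
gives, with `I = E[log X]`, the linear relations `p E[log (1 + X)] = 2I`,
`p E[log (1 + 2X)] = 3I` and `p E[(log X)⁺] = I`, while `E[(log X)⁻] = (1 - p) E[(log X)⁺]`.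
Since `log (1 + 2x) - log 3` lies between `-(log x)⁻` and `(log x)⁺`, multiplying by `p`
and substituting yields both bounds.
-/

open MeasureTheory ProbabilityTheory Real

section Bernoulli

variable {Ω α : Type*} [MeasurableSpace Ω] [MeasurableSpace α] {μ : Measure Ω} {p : ℝ}
  {ε : Ω → ℝ}

lemma setIntegral_preimage_eq_mul_of_indepFun {Y : Ω → α} {s : Set ℝ} {g : α → ℝ}
    (hY : Measurable Y) (hε : Measurable ε) (hind : IndepFun Y ε μ) (hs : MeasurableSet s)
    (hg : Measurable g) :
    ∫ ω in ε ⁻¹' s, g (Y ω) ∂μ = μ.real (ε ⁻¹' s) * ∫ ω, g (Y ω) ∂μ :=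
  Indep.setIntegral_eq_mul hε.comap_le ((IndepFun_iff_Indep _ _ _).1 hind.symm)
    hY.aemeasurable ⟨s, hs, rfl⟩ hg.aestronglyMeasurable

lemma ae_eq_zero_or_eq_one_of_measure [IsProbabilityMeasure μ] (hp0 : 0 ≤ p) (hp1 : p ≤ 1)
    (hε : Measurable ε)
    (hε1 : μ {ω | ε ω = 1} = ENNReal.ofReal p)
    (hε0 : μ {ω | ε ω = 0} = ENNReal.ofReal (1 - p)) :
    ∀ᵐ ω ∂μ, ε ω = 0 ∨ ε ω = 1 := by
  have hdisj : Disjoint {ω | ε ω = 0} {ω | ε ω = 1} :=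
    Set.disjoint_left.2 fun ω h0 h1 => by simp_all
  have hunion : μ ({ω | ε ω = 0} ∪ {ω | ε ω = 1}) = 1 := by
    rw [measure_union hdisj (hε (measurableSet_singleton 1)), hε0, hε1,
      ← ENNReal.ofReal_add (by linarith) hp0]
    norm_num
  exact (prob_compl_eq_zero_iff
    ((hε (measurableSet_singleton 0)).union (hε (measurableSet_singleton 1)))).2 hunion

lemma integral_comp_of_indepFun_bernoulli [IsProbabilityMeasure μ] {Y : Ω → α} {f : α → ℝ → ℝ}
    (hp0 : 0 ≤ p) (hp1 : p ≤ 1) (hY : Measurable Y) (hε : Measurable ε)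
    (hε1 : μ {ω | ε ω = 1} = ENNReal.ofReal p)
    (hε0 : μ {ω | ε ω = 0} = ENNReal.ofReal (1 - p)) (hind : IndepFun Y ε μ)
    (hf0 : Measurable (f · 0)) (hf1 : Measurable (f · 1))
    (hi0 : Integrable (fun ω => f (Y ω) 0) μ) (hi1 : Integrable (fun ω => f (Y ω) 1) μ) :
    ∫ ω, f (Y ω) (ε ω) ∂μ = (1 - p) * ∫ ω, f (Y ω) 0 ∂μ + p * ∫ ω, f (Y ω) 1 ∂μ := by
  have hs0 : MeasurableSet (ε ⁻¹' {0}) := hε (measurableSet_singleton 0)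
  have hs1 : MeasurableSet (ε ⁻¹' {1}) := hε (measurableSet_singleton 1)
  have hsplit : (fun ω => f (Y ω) (ε ω)) =ᵐ[μ]
      fun ω => (ε ⁻¹' {0}).indicator (fun ω => f (Y ω) 0) ω +
        (ε ⁻¹' {1}).indicator (fun ω => f (Y ω) 1) ω := by
    filter_upwards [ae_eq_zero_or_eq_one_of_measure hp0 hp1 hε hε1 hε0] with ω hω
    rcases hω with hω | hω <;> simp [hω]
  rw [integral_congr_ae hsplit, integral_add (hi0.indicator hs0) (hi1.indicator hs1),
    integral_indicator hs0, integral_indicator hs1,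
    setIntegral_preimage_eq_mul_of_indepFun hY hε hind (measurableSet_singleton 0) hf0,
    setIntegral_preimage_eq_mul_of_indepFun hY hε hind (measurableSet_singleton 1) hf1]
  simp only [measureReal_def, Set.preimage, Set.mem_singleton_iff, hε0, hε1,
    ENNReal.toReal_ofReal hp0, ENNReal.toReal_ofReal (sub_nonneg.2 hp1)]

end Bernoulli

lemma Real.log_one_add_two_mul_le {x : ℝ} (hx : 0 < x) :
    log (1 + 2 * x) ≤ log 3 + max (log x) 0 := by
  rcases le_total x 1 with h | h
  · have : log (1 + 2 * x) ≤ log 3 := log_le_log (by positivity) (by linarith)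
    linarith [le_max_right (log x) 0]
  · have : log (1 + 2 * x) ≤ log (3 * x) := log_le_log (by positivity) (by linarith)
    rw [log_mul (by norm_num) hx.ne'] at this
    linarith [le_max_left (log x) 0]

lemma Real.log_three_sub_le {x : ℝ} (hx : 0 < x) :
    log 3 - max (-log x) 0 ≤ log (1 + 2 * x) := by
  rcases le_total x 1 with h | h
  · have : log (3 * x) ≤ log (1 + 2 * x) := log_le_log (by positivity) (by linarith)
    rw [log_mul (by norm_num) hx.ne'] at this
    linarith [le_max_left (-log x) 0]
  · have : log 3 ≤ log (1 + 2 * x) := log_le_log (by norm_num) (by linarith)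
    linarith [le_max_right (-log x) 0]

lemma integral_max_zero_sub_integral_max_neg_zero {α : Type*} [MeasurableSpace α] {μ : Measure α}
    {f : α → ℝ} (hf : Integrable f μ) :
    ∫ a, max (f a) 0 ∂μ - ∫ a, max (-f a) 0 ∂μ = ∫ a, f a ∂μ := by
  rw [← integral_sub hf.pos_part hf.neg_part]
  simp only [max_zero_sub_max_neg_zero_eq_self]

structure IsFibonacciFixedPoint {Ω : Type*} [MeasurableSpace Ω] (μ : Measure Ω) (p : ℝ)
    (X ε : Ω → ℝ) : Prop where
  nonneg : 0 ≤ p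
  le_one : p ≤ 1
  measurable_X : Measurable X
  measurable_ε : Measurable ε
  ae_pos : ∀ᵐ ω ∂μ, 0 < X ω
  measure_eq_one : μ {ω | ε ω = 1} = ENNReal.ofReal p
  measure_eq_zero : μ {ω | ε ω = 0} = ENNReal.ofReal (1 - p)
  indepFun : IndepFun X ε μ
  map_eq : μ.map X = μ.map (fun ω => 1 / X ω + ε ω)

namespace IsFibonacciFixedPoint

variable {Ω : Type*} [MeasurableSpace Ω] {μ : Measure Ω} [IsProbabilityMeasure μ] {p : ℝ}
  {X ε : Ω → ℝ}

lemma integral_comp (h : IsFibonacciFixedPoint μ p X ε) {g : ℝ → ℝ} (hg : Measurable g)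
    (hi0 : Integrable (fun ω => g (1 / X ω)) μ) (hi1 : Integrable (fun ω => g (1 / X ω + 1)) μ) :
    ∫ ω, g (X ω) ∂μ = (1 - p) * ∫ ω, g (1 / X ω) ∂μ + p * ∫ ω, g (1 / X ω + 1) ∂μ := by
  have hinv : Measurable fun ω => 1 / X ω := measurable_const.div h.measurable_X
  have hY : Measurable fun ω => 1 / X ω + ε ω := hinv.add h.measurable_ε
  rw [← integral_map h.measurable_X.aemeasurable hg.aestronglyMeasurable, h.map_eq,
    integral_map hY.aemeasurable hg.aestronglyMeasurable]
  simpa using integral_comp_of_indepFun_bernoulli (f := fun y e => g (y + e)) h.nonneg h.le_one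
    hinv h.measurable_ε h.measure_eq_one h.measure_eq_zero
    (h.indepFun.comp (measurable_const.div measurable_id) measurable_id)
    (by simpa using hg) (hg.comp (measurable_add_const 1)) (by simpa using hi0) hi1

lemma two_mul_integral_log_eq (h : IsFibonacciFixedPoint μ p X ε)
    (hi1 : Integrable (fun ω => log (X ω)) μ) (hi2 : Integrable (fun ω => log (1 + X ω)) μ) :
    2 * ∫ ω, log (X ω) ∂μ = p * ∫ ω, log (1 + X ω) ∂μ := by
  have hlog : (fun ω => log (1 / X ω + 1)) =ᵐ[μ] fun ω => log (1 + X ω) - log (X ω) := by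
    filter_upwards [h.ae_pos] with ω hω
    rw [← log_div (by positivity) hω.ne']
    field_simp
  have key := h.integral_comp measurable_log (by simpa using hi1.neg)
    ((hi2.sub hi1).congr hlog.symm)
  have hneg : (fun ω => log (1 / X ω)) = fun ω => -log (X ω) := by simp
  rw [hneg, integral_neg, integral_congr_ae hlog, integral_sub hi2 hi1] at key
  linarith

lemma three_mul_integral_log_eq (h : IsFibonacciFixedPoint μ p X ε)
    (hi1 : Integrable (fun ω => log (X ω)) μ) (hi2 : Integrable (fun ω => log (1 + X ω)) μ)
    (hi3 : Integrable (fun ω => log (1 + 2 * X ω)) μ) :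
    3 * ∫ ω, log (X ω) ∂μ = p * ∫ ω, log (1 + 2 * X ω) ∂μ := by
  have hlog : (fun ω => log (1 + 1 / X ω)) =ᵐ[μ] fun ω => log (1 + X ω) - log (X ω) := by
    filter_upwards [h.ae_pos] with ω hω
    rw [← log_div (by positivity) hω.ne', add_comm (1 : ℝ) (X ω)]
    field_simp
  have hlog' : (fun ω => log (1 + (1 / X ω + 1))) =ᵐ[μ]
      fun ω => log (1 + 2 * X ω) - log (X ω) := by
    filter_upwards [h.ae_pos] with ω hω
    rw [← log_div (by positivity) hω.ne']
    field_simp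
    ring_nf
  have key := h.integral_comp (g := fun x => log (1 + x))
    (measurable_log.comp (measurable_const_add 1))
    ((hi2.sub hi1).congr hlog.symm) ((hi3.sub hi1).congr hlog'.symm)
  rw [integral_congr_ae hlog, integral_congr_ae hlog', integral_sub hi2 hi1,
    integral_sub hi3 hi1] at key
  linear_combination key + two_mul_integral_log_eq h hi1 hi2

lemma integral_max_neg_log_eq (h : IsFibonacciFixedPoint μ p X ε)
    (hi1 : Integrable (fun ω => log (X ω)) μ) :
    ∫ ω, max (-log (X ω)) 0 ∂μ = (1 - p) * ∫ ω, max (log (X ω)) 0 ∂μ := by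
  have hlog : (fun ω => max (-log (1 / X ω + 1)) 0) =ᵐ[μ] fun _ => 0 := by
    filter_upwards [h.ae_pos] with ω hω
    have : 0 ≤ log (1 / X ω + 1) := log_nonneg (by simp [hω.le])
    exact max_eq_right (by linarith)
  have key := h.integral_comp (g := fun x => max (-log x) 0)
    (measurable_log.neg.max measurable_const) (by simpa using hi1.pos_part)
    ((integrable_zero _ _ _).congr hlog.symm)
  have hneg : (fun ω => max (-log (1 / X ω)) 0) = fun ω => max (log (X ω)) 0 := by simp
  rw [hneg, integral_congr_ae hlog, integral_zero, mul_zero, add_zero] at key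
  exact key

lemma integral_log_eq_mul_integral_max_log (h : IsFibonacciFixedPoint μ p X ε)
    (hi1 : Integrable (fun ω => log (X ω)) μ) :
    ∫ ω, log (X ω) ∂μ = p * ∫ ω, max (log (X ω)) 0 ∂μ := by
  rw [← integral_max_zero_sub_integral_max_neg_zero hi1, integral_max_neg_log_eq h hi1]
  ring

lemma integral_log_le (h : IsFibonacciFixedPoint μ p X ε)
    (hi1 : Integrable (fun ω => log (X ω)) μ) (hi2 : Integrable (fun ω => log (1 + X ω)) μ)
    (hi3 : Integrable (fun ω => log (1 + 2 * X ω)) μ) :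
    ∫ ω, log (X ω) ∂μ ≤ p * log 3 / 2 := by
  have hbound : ∫ ω, log (1 + 2 * X ω) ∂μ ≤ log 3 + ∫ ω, max (log (X ω)) 0 ∂μ :=
    calc ∫ ω, log (1 + 2 * X ω) ∂μ ≤ ∫ ω, (log 3 + max (log (X ω)) 0) ∂μ :=
          integral_mono_ae hi3 ((integrable_const _).add hi1.pos_part)
            (by filter_upwards [h.ae_pos] with ω hω using log_one_add_two_mul_le hω)
      _ = _ := by
          rw [integral_add (integrable_const _) hi1.pos_part, integral_const, probReal_univ,
            one_smul]
  have h3 := three_mul_integral_log_eq h hi1 hi2 hi3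
  have hM := integral_log_eq_mul_integral_max_log h hi1
  rw [le_div_iff₀ two_pos]
  linarith [mul_le_mul_of_nonneg_left hbound h.nonneg]

lemma le_integral_log (h : IsFibonacciFixedPoint μ p X ε)
    (hi1 : Integrable (fun ω => log (X ω)) μ) (hi2 : Integrable (fun ω => log (1 + X ω)) μ)
    (hi3 : Integrable (fun ω => log (1 + 2 * X ω)) μ) :
    p * log 3 / (4 - p) ≤ ∫ ω, log (X ω) ∂μ := by
  have hbound : log 3 - ∫ ω, max (-log (X ω)) 0 ∂μ ≤ ∫ ω, log (1 + 2 * X ω) ∂μ :=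
    calc log 3 - ∫ ω, max (-log (X ω)) 0 ∂μ = ∫ ω, (log 3 - max (-log (X ω)) 0) ∂μ := by
          rw [integral_sub (integrable_const _) hi1.neg_part, integral_const, probReal_univ,
            one_smul]
      _ ≤ _ := integral_mono_ae ((integrable_const _).sub hi1.neg_part) hi3
            (by filter_upwards [h.ae_pos] with ω hω using log_three_sub_le hω)
  have h3 := three_mul_integral_log_eq h hi1 hi2 hi3
  have hpN : p * ∫ ω, max (-log (X ω)) 0 ∂μ = (1 - p) * ∫ ω, log (X ω) ∂μ := by
    rw [integral_max_neg_log_eq h hi1, integral_log_eq_mul_integral_max_log h hi1]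
    ring
  rw [div_le_iff₀ (by linarith [h.le_one])]
  linarith [mul_le_mul_of_nonneg_left hbound h.nonneg]

end IsFibonacciFixedPoint

theorem bernoulli_p_lyapunov_bounds_general
    {Ω : Type*} [MeasureSpace Ω] [IsProbabilityMeasure (ℙ : Measure Ω)]
    (p : ℝ) (hp0 : 0 < p) (hp1 : p < 1)
    (X ε : Ω → ℝ) (hXm : Measurable X) (hεm : Measurable ε)
    (hXpos : ∀ᵐ ω ∂ℙ, 0 < X ω)
    (hε1 : ℙ {ω | ε ω = 1} = ENNReal.ofReal p)
    (hε0 : ℙ {ω | ε ω = 0} = ENNReal.ofReal (1 - p))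
    (hindep : IndepFun X ε ℙ)
    (hdist : Measure.map X ℙ = Measure.map (fun ω => 1 / X ω + ε ω) ℙ)
    (hint1 : Integrable (fun ω => Real.log (X ω)) ℙ)
    (hint2 : Integrable (fun ω => Real.log (1 + X ω)) ℙ)
    (hint3 : Integrable (fun ω => Real.log (1 + 2 * X ω)) ℙ) :
    p * Real.log 3 / (4 - p) ≤ ∫ ω, Real.log (X ω) ∂ℙ ∧
      ∫ ω, Real.log (X ω) ∂ℙ ≤ p * Real.log 3 / 2 := by
  have h : IsFibonacciFixedPoint ℙ p X ε :=
    ⟨hp0.le, hp1.le, hXm, hεm, hXpos, hε1, hε0, hindep, hdist⟩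
  exact ⟨h.le_integral_log hint1 hint2 hint3, h.integral_log_le hint1 hint2 hint3⟩

/-- Bounds on the Lyapunov exponent `λ(p) = E[log X]` for the Bernoulli(p)
random Fibonacci matrix model: `p·log 3/(4−p) ≤ E[log X] ≤ p·log 3/2`. -/
theorem bernoulli_p_lyapunov_bounds
    {Ω : Type*} [MeasureSpace Ω] [IsProbabilityMeasure (ℙ : Measure Ω)]
    (p : ℝ) (hp0 : 0 < p) (hp1 : p < 1)
    (X ε : Ω → ℝ) (hXm : Measurable X) (hεm : Measurable ε)
    (hXpos : ∀ᵐ ω ∂ℙ, 0 < X ω)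
    (hatomless : ∀ c : ℝ, ℙ {ω | X ω = c} = 0)
    (hε1 : ℙ {ω | ε ω = 1} = ENNReal.ofReal p)
    (hε0 : ℙ {ω | ε ω = 0} = ENNReal.ofReal (1 - p))
    (hindep : IndepFun X ε ℙ)
    (hdist : Measure.map X ℙ = Measure.map (fun ω => 1 / X ω + ε ω) ℙ)
    (hint1 : Integrable (fun ω => Real.log (X ω)) ℙ)
    (hint2 : Integrable (fun ω => Real.log (1 + X ω)) ℙ)
    (hint3 : Integrable (fun ω => Real.log (1 + 2 * X ω)) ℙ) :
    p * Real.log 3 / (4 - p) ≤ ∫ ω, Real.log (X ω) ∂ℙ ∧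
      ∫ ω, Real.log (X ω) ∂ℙ ≤ p * Real.log 3 / 2 :=
  bernoulli_p_lyapunov_bounds_general p hp0 hp1 X ε hXm hεm hXpos hε1 hε0 hindep hdist hint1 hint2
    hint3
end

section
/- Let 0 < p < 1 and let X be a positive random variable satisfying the distributional identity X ~ 1/X + ε with ε ~ Bernoulli(p) independent of X. Then E[log X] = (p/3)·E[log(2X + 1)]. -/
open MeasureTheory ProbabilityTheory Real

/-!
Conditioning on `ε` turns `X ~ 1/X + ε` into `E f(X) = (1-p) E f(1/X) + p E f(1/X + 1)`.
For `f = log (c + ·)`, the identity `log (c + 1/x) = log (1 + c x) - log x` expresses both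
sides through `E log X` and the moments `E log (1 + c X)`. The cases `c = 0` and `c = 1` give
`2 E log X = p E log (1 + X)` and `p E log (1 + X) = p E log (1 + 2X) - E log X`, and adding
them gives `3 E log X = p E log (1 + 2X)`.
-/

section Bernoulli

variable {Ω : Type*} [MeasurableSpace Ω] {μ : Measure Ω} {ε : Ω → ℝ}

lemma ae_eq_zero_or_eq_one_of_measure_eq [IsProbabilityMeasure μ] {p : ℝ} (hε : Measurable ε)
    (hp0 : 0 ≤ p) (hp1 : p ≤ 1) (h1 : μ {ω | ε ω = 1} = ENNReal.ofReal p)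
    (h0 : μ {ω | ε ω = 0} = ENNReal.ofReal (1 - p)) :
    ∀ᵐ ω ∂μ, ε ω = 0 ∨ ε ω = 1 := by
  have hs0 : MeasurableSet {ω | ε ω = 0} := hε (measurableSet_singleton 0)
  have hs1 : MeasurableSet {ω | ε ω = 1} := hε (measurableSet_singleton 1)
  have hs : MeasurableSet {ω | ε ω = 0 ∨ ε ω = 1} := by
    rw [Set.ofPred_or]
    exact hs0.union hs1
  rw [ae_iff_measure_eq hs.nullMeasurableSet, Set.ofPred_or,
    measure_union (Set.disjoint_left.2 fun ω h0 h1 => by simp_all) hs1, h0, h1,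
    ← ENNReal.ofReal_add (by linarith) hp0, sub_add_cancel, ENNReal.ofReal_one, measure_univ]

lemma integral_eq_measureReal_of_ae_eq_zero_or_eq_one (hε : Measurable ε)
    (h01 : ∀ᵐ ω ∂μ, ε ω = 0 ∨ ε ω = 1) :
    ∫ ω, ε ω ∂μ = μ.real {ω | ε ω = 1} := by
  rw [← integral_indicator_one (s := {ω | ε ω = 1}) (hε (measurableSet_singleton 1))]
  refine integral_congr_ae ?_
  filter_upwards [h01] with ω h
  rcases h with h | h <;> simp [h]

lemma integral_comp_add_of_indepFun [IsFiniteMeasure μ] {Y : Ω → ℝ} (hY : Measurable Y)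
    (hε : Measurable ε) (hind : IndepFun Y ε μ) (h01 : ∀ᵐ ω ∂μ, ε ω = 0 ∨ ε ω = 1)
    {f : ℝ → ℝ} (hf : Measurable f) (hf0 : Integrable (fun ω => f (Y ω)) μ)
    (hf1 : Integrable (fun ω => f (Y ω + 1)) μ) :
    ∫ ω, f (Y ω + ε ω) ∂μ
      = (1 - ∫ ω, ε ω ∂μ) * ∫ ω, f (Y ω) ∂μ + (∫ ω, ε ω ∂μ) * ∫ ω, f (Y ω + 1) ∂μ := by
  set g : ℝ → ℝ := fun y => f (y + 1) - f y
  have hg : Measurable g := (hf.comp (measurable_add_const 1)).sub hf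
  have hindg : IndepFun ε (fun ω => g (Y ω)) μ := hind.symm.comp measurable_id hg
  have hεint : Integrable ε μ := by
    refine Integrable.of_bound hε.aestronglyMeasurable 1 ?_
    filter_upwards [h01] with ω h
    rcases h with h | h <;> simp [h]
  have hsplit : (fun ω => f (Y ω + ε ω)) =ᵐ[μ] fun ω => f (Y ω) + ε ω * g (Y ω) := by
    filter_upwards [h01] with ω h
    rcases h with h | h <;> simp [g, h]
  calc ∫ ω, f (Y ω + ε ω) ∂μ = ∫ ω, f (Y ω) ∂μ + ∫ ω, ε ω * g (Y ω) ∂μ := by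
        rw [integral_congr_ae hsplit]
        exact integral_add hf0 (hindg.integrable_mul hεint (hf1.sub hf0))
    _ = ∫ ω, f (Y ω) ∂μ + (∫ ω, ε ω ∂μ) * (∫ ω, f (Y ω + 1) ∂μ - ∫ ω, f (Y ω) ∂μ) := by
        rw [← integral_sub hf1 hf0]
        exact congrArg _ (hindg.integral_mul_eq_mul_integral hε.aestronglyMeasurable
          (hg.comp hY).aestronglyMeasurable)
    _ = _ := by ring

end Bernoulli

lemma Real.log_add_one_div {x : ℝ} (hx : 0 < x) {c : ℝ} (hc : 0 ≤ c) :
    log (c + 1 / x) = log (1 + c * x) - log x := by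
  rw [← log_div (by positivity) hx.ne']
  congr 1
  field_simp
  ring

section LogMoments

variable {Ω : Type*} [MeasurableSpace Ω] {μ : Measure Ω} [IsProbabilityMeasure μ] {p : ℝ}
  {X ε : Ω → ℝ}

lemma integral_log_add_eq_of_map_eq (hX : Measurable X) (hε : Measurable ε)
    (hind : IndepFun X ε μ) (h01 : ∀ᵐ ω ∂μ, ε ω = 0 ∨ ε ω = 1) (hmean : ∫ ω, ε ω ∂μ = p)
    (hdist : μ.map X = μ.map (fun ω => 1 / X ω + ε ω)) (hXpos : ∀ᵐ ω ∂μ, 0 < X ω)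
    {c : ℝ} (hc : 0 ≤ c) (hlog : Integrable (fun ω => log (X ω)) μ)
    (hlogc : Integrable (fun ω => log (1 + c * X ω)) μ)
    (hlogc1 : Integrable (fun ω => log (1 + (c + 1) * X ω)) μ) :
    ∫ ω, log (c + X ω) ∂μ
      = (1 - p) * (∫ ω, log (1 + c * X ω) ∂μ - ∫ ω, log (X ω) ∂μ)
        + p * (∫ ω, log (1 + (c + 1) * X ω) ∂μ - ∫ ω, log (X ω) ∂μ) := by
  have hY : Measurable fun ω => 1 / X ω := measurable_const.div hX
  have hf : Measurable fun y => log (c + y) := measurable_log.comp (measurable_const_add c)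
  have hlog_inv : ∀ d, 0 ≤ d → (fun ω => log (d + 1 / X ω))
      =ᵐ[μ] fun ω => log (1 + d * X ω) - log (X ω) := fun d hd => by
    filter_upwards [hXpos] with ω hω using log_add_one_div hω hd
  have hshift : (fun ω => log (c + (1 / X ω + 1))) = fun ω => log ((c + 1) + 1 / X ω) := by
    ext ω; ring_nf
  have hident : IdentDistrib X (fun ω => 1 / X ω + ε ω) μ μ :=
    ⟨hX.aemeasurable, (hY.add hε).aemeasurable, hdist⟩
  refine (hident.comp hf).integral_eq.trans ?_
  have hindY : IndepFun (fun ω => 1 / X ω) ε μ :=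
    hind.comp (measurable_const.div measurable_id) measurable_id
  refine (integral_comp_add_of_indepFun hY hε hindY h01 hf
    ((hlogc.sub hlog).congr (hlog_inv c hc).symm) ?_).trans ?_
  · rw [hshift]
    exact (hlogc1.sub hlog).congr (hlog_inv (c + 1) (by positivity)).symm
  · rw [hmean, hshift, integral_congr_ae (hlog_inv c hc),
      integral_congr_ae (hlog_inv (c + 1) (by positivity)), integral_sub hlogc hlog,
      integral_sub hlogc1 hlog]

end LogMoments

/-- For the Bernoulli(p) invariant distribution `X ~ 1/X + ε`:
`E[log X] = (p/3)·E[log(2X + 1)]`. -/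
theorem bernoulli_p_log_identity_two
    {Ω : Type*} [MeasureSpace Ω] [IsProbabilityMeasure (ℙ : Measure Ω)]
    (p : ℝ) (hp0 : 0 < p) (hp1 : p < 1)
    (X ε : Ω → ℝ) (hXm : Measurable X) (hεm : Measurable ε)
    (hXpos : ∀ᵐ ω ∂ℙ, 0 < X ω)
    (hε1 : ℙ {ω | ε ω = 1} = ENNReal.ofReal p)
    (hε0 : ℙ {ω | ε ω = 0} = ENNReal.ofReal (1 - p))
    (hindep : IndepFun X ε ℙ)
    (hdist : Measure.map X ℙ = Measure.map (fun ω => 1 / X ω + ε ω) ℙ)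
    (hint1 : Integrable (fun ω => Real.log (X ω)) ℙ)
    (hint2 : Integrable (fun ω => Real.log (1 + X ω)) ℙ)
    (hint3 : Integrable (fun ω => Real.log (1 + 2 * X ω)) ℙ) :
    ∫ ω, Real.log (X ω) ∂ℙ = (p / 3) * ∫ ω, Real.log (2 * X ω + 1) ∂ℙ := by
  have h01 := ae_eq_zero_or_eq_one_of_measure_eq hεm hp0.le hp1.le hε1 hε0
  have hmean : ∫ ω, ε ω = p := by
    rw [integral_eq_measureReal_of_ae_eq_zero_or_eq_one hεm h01, measureReal_def, hε1,
      ENNReal.toReal_ofReal hp0.le]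
  have hlogX := integral_log_add_eq_of_map_eq hXm hεm hindep h01 hmean hdist hXpos le_rfl hint1
    (by simp) (by simpa using hint2)
  have hlog1X := integral_log_add_eq_of_map_eq hXm hεm hindep h01 hmean hdist hXpos zero_le_one
    hint1 (by simpa using hint2) (by simpa [one_add_one_eq_two] using hint3)
  simp only [zero_add, zero_mul, add_zero, log_one, integral_zero, one_mul, one_add_one_eq_two]
    at hlogX hlog1X
  simp only [add_comm (2 * X _)]
  linear_combination (1 / 3 : ℝ) * hlogX + (1 / 3 : ℝ) * hlog1X
end

section
/- Let 0 < p < 1 and let X be a positive random variable with atomless law satisfying the distributional identity X ~ 1/X + ε with ε ~ Bernoulli(p) independent of X. Then E[log(X)·1_{X<1}] = ((p − 1)/p)·E[log X]. -/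
open MeasureTheory ProbabilityTheory Real Set

/-! On `{ε = 1}` we have `1/X + ε > 1`, and on `{ε = 0}` we have `1/X + ε < 1` exactly when
`X > 1`, where `log (1/X) = -log X`. Hence, by the distributional identity and independence,
`E[log X; X < 1] = -(1 - p) E[log X; X > 1]`. Since `log 1 = 0`, also
`E[log X; X < 1] + E[log X; X > 1] = E[log X]`, and eliminating
`E[log X; X > 1]` gives the claim. -/

lemma indicator_Iio_log_inv_add {x e : ℝ} (hx : 0 < x) (he : e = 0 ∨ e = 1) :
    (Iio 1).indicator log (1 / x + e) =
      ({0} : Set ℝ).indicator 1 e * -(Ioi 1).indicator log x := by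
  rcases he with rfl | rfl
  · rw [add_zero, indicator_of_mem (mem_singleton 0), Pi.one_apply, one_mul]
    by_cases h : 1 < x
    · rw [indicator_of_mem (mem_Iio.mpr ((div_lt_one hx).mpr h)),
        indicator_of_mem (mem_Ioi.mpr h), one_div, log_inv]
    · rw [indicator_of_notMem fun h' => h ((div_lt_one hx).mp (mem_Iio.mp h')),
        indicator_of_notMem (s := Ioi 1) h, neg_zero]
  · have h : 1 / x + 1 ∉ Iio 1 :=
      not_lt.mpr (le_add_of_nonneg_left (one_div_pos.mpr hx).le)
    rw [indicator_of_notMem h, indicator_of_notMem (by norm_num : (1 : ℝ) ∉ ({0} : Set ℝ)),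
      zero_mul]

section

variable {Ω : Type*} [MeasurableSpace Ω] {μ : Measure Ω}

lemma ae_eq_zero_or_eq_one_of_measure_add [IsProbabilityMeasure μ] {ε : Ω → ℝ}
    (hε : Measurable ε) (h : μ {ω | ε ω = 0} + μ {ω | ε ω = 1} = 1) :
    ∀ᵐ ω ∂μ, ε ω = 0 ∨ ε ω = 1 := by
  have hdisj : Disjoint {ω | ε ω = 0} {ω | ε ω = 1} :=
    disjoint_left.mpr fun ω h0 h1 => zero_ne_one (h0.symm.trans h1)
  refine (ae_iff_measure_eq ?_).mpr ?_ <;> rw [ofPred_or]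
  · exact ((hε (measurableSet_singleton 0)).union
      (hε (measurableSet_singleton 1))).nullMeasurableSet
  · rw [measure_union hdisj (hε (measurableSet_singleton 1)), h, measure_univ]

lemma setIntegral_preimage_eq_integral_indicator_comp {α : Type*} [MeasurableSpace α]
    {X : Ω → α} (hX : Measurable X) {s : Set α} (hs : MeasurableSet s) (g : α → ℝ) :
    ∫ ω in X ⁻¹' s, g (X ω) ∂μ = ∫ ω, s.indicator g (X ω) ∂μ := by
  rw [← integral_indicator (hX hs)]
  rfl

lemma integral_indicator_singleton_comp {ε : Ω → ℝ} (hε : Measurable ε) (c : ℝ) :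
    ∫ ω, ({c} : Set ℝ).indicator 1 (ε ω) ∂μ = μ.real {ω | ε ω = c} :=
  integral_indicator_one (hε (measurableSet_singleton c))

lemma setIntegral_log_lt_one_add_setIntegral_log_gt_one {X : Ω → ℝ} (hX : Measurable X)
    (hint : Integrable (fun ω => log (X ω)) μ) :
    ∫ ω in {ω | X ω < 1}, log (X ω) ∂μ + ∫ ω in {ω | 1 < X ω}, log (X ω) ∂μ =
      ∫ ω, log (X ω) ∂μ := by
  have hdisj : Disjoint {ω | X ω < 1} {ω | 1 < X ω} :=
    disjoint_left.mpr fun ω h1 h2 => lt_asymm (a := X ω) (b := 1) h1 h2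
  rw [← setIntegral_union hdisj (hX measurableSet_Ioi) hint.integrableOn hint.integrableOn]
  refine setIntegral_eq_integral_of_forall_compl_eq_zero fun ω hω => ?_
  simp only [mem_union, mem_ofPred_eq, not_or, not_lt] at hω
  rw [le_antisymm hω.2 hω.1, log_one]

lemma setIntegral_log_lt_one_eq_of_identDistrib_inv_add {X ε : Ω → ℝ} (hX : Measurable X)
    (hε : Measurable ε) (hXpos : ∀ᵐ ω ∂μ, 0 < X ω) (hε01 : ∀ᵐ ω ∂μ, ε ω = 0 ∨ ε ω = 1)
    (hindep : IndepFun X ε μ) (hid : IdentDistrib X (fun ω => 1 / X ω + ε ω) μ μ) :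
    ∫ ω in {ω | X ω < 1}, log (X ω) ∂μ =
      μ.real {ω | ε ω = 0} * -∫ ω in {ω | 1 < X ω}, log (X ω) ∂μ := by
  have hLm : Measurable ((Iio (1 : ℝ)).indicator log) :=
    measurable_log.indicator measurableSet_Iio
  have hZm : Measurable (({0} : Set ℝ).indicator (1 : ℝ → ℝ)) :=
    measurable_one.indicator (measurableSet_singleton 0)
  have hRm : Measurable (-(Ioi (1 : ℝ)).indicator log) :=
    (measurable_log.indicator measurableSet_Ioi).neg
  calc ∫ ω in {ω | X ω < 1}, log (X ω) ∂μ
      = ∫ ω, (Iio 1).indicator log (X ω) ∂μ :=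
        setIntegral_preimage_eq_integral_indicator_comp hX measurableSet_Iio log
    _ = ∫ ω, (Iio 1).indicator log (1 / X ω + ε ω) ∂μ := (hid.comp hLm).integral_eq
    _ = ∫ ω, ({0} : Set ℝ).indicator 1 (ε ω) * -(Ioi 1).indicator log (X ω) ∂μ :=
        integral_congr_ae (by
          filter_upwards [hXpos, hε01] with ω hx he using indicator_Iio_log_inv_add hx he)
    _ = (∫ ω, ({0} : Set ℝ).indicator 1 (ε ω) ∂μ) * ∫ ω, -(Ioi 1).indicator log (X ω) ∂μ :=
        (hindep.symm.comp hZm hRm).integral_fun_mul_eq_mul_integral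
          (hZm.comp hε).aestronglyMeasurable (hRm.comp hX).aestronglyMeasurable
    _ = μ.real {ω | ε ω = 0} * -∫ ω in {ω | 1 < X ω}, log (X ω) ∂μ := by
        rw [integral_indicator_singleton_comp hε, integral_neg,
          ← setIntegral_preimage_eq_integral_indicator_comp hX measurableSet_Ioi log]
        rfl

end

theorem bernoulli_p_indicator_identity_lt_full_general
    {Ω : Type*} [MeasureSpace Ω] [IsProbabilityMeasure (ℙ : Measure Ω)]
    (p : ℝ) (hp0 : 0 < p) (hp1 : p < 1)
    (X ε : Ω → ℝ) (hXm : Measurable X) (hεm : Measurable ε)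
    (hXpos : ∀ᵐ ω ∂ℙ, 0 < X ω)
    (hε1 : ℙ {ω | ε ω = 1} = ENNReal.ofReal p)
    (hε0 : ℙ {ω | ε ω = 0} = ENNReal.ofReal (1 - p))
    (hindep : IndepFun X ε ℙ)
    (hdist : Measure.map X ℙ = Measure.map (fun ω => 1 / X ω + ε ω) ℙ)
    (hint : Integrable (fun ω => Real.log (X ω)) ℙ) :
    ∫ ω in {ω | X ω < 1}, Real.log (X ω) ∂ℙ =
      ((p - 1) / p) * ∫ ω, Real.log (X ω) ∂ℙ := by
  have hε01 : ∀ᵐ ω ∂ℙ, ε ω = 0 ∨ ε ω = 1 := by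
    refine ae_eq_zero_or_eq_one_of_measure_add hεm ?_
    rw [hε0, hε1, ← ENNReal.ofReal_add (by linarith) hp0.le, sub_add_cancel,
      ENNReal.ofReal_one]
  have hid : IdentDistrib X (fun ω => 1 / X ω + ε ω) ℙ ℙ :=
    ⟨hXm.aemeasurable, ((hXm.const_div 1).add hεm).aemeasurable, hdist⟩
  have hlt := setIntegral_log_lt_one_eq_of_identDistrib_inv_add hXm hεm hXpos hε01 hindep hid
  rw [measureReal_def, hε0, ENNReal.toReal_ofReal (by linarith)] at hlt
  have hsplit := setIntegral_log_lt_one_add_setIntegral_log_gt_one hXm hint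
  rw [div_mul_eq_mul_div, eq_div_iff hp0.ne']
  linear_combination hlt + (p - 1) * hsplit

/-- For the Bernoulli(p) invariant distribution `X ~ 1/X + ε`:
`E[log(X)·1_{X<1}] = ((p − 1)/p)·E[log X]`. -/
theorem bernoulli_p_indicator_identity_lt_full
    {Ω : Type*} [MeasureSpace Ω] [IsProbabilityMeasure (ℙ : Measure Ω)]
    (p : ℝ) (hp0 : 0 < p) (hp1 : p < 1)
    (X ε : Ω → ℝ) (hXm : Measurable X) (hεm : Measurable ε)
    (hXpos : ∀ᵐ ω ∂ℙ, 0 < X ω)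
    (hatomless : ∀ c : ℝ, ℙ {ω | X ω = c} = 0)
    (hε1 : ℙ {ω | ε ω = 1} = ENNReal.ofReal p)
    (hε0 : ℙ {ω | ε ω = 0} = ENNReal.ofReal (1 - p))
    (hindep : IndepFun X ε ℙ)
    (hdist : Measure.map X ℙ = Measure.map (fun ω => 1 / X ω + ε ω) ℙ)
    (hint : Integrable (fun ω => Real.log (X ω)) ℙ) :
    ∫ ω in {ω | X ω < 1}, Real.log (X ω) ∂ℙ =
      ((p - 1) / p) * ∫ ω, Real.log (X ω) ∂ℙ :=
  bernoulli_p_indicator_identity_lt_full_general p hp0 hp1 X ε hXm hεm hXpos hε1 hε0 hindep hdist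
    hint
end

section
/- Let X be a positive random variable satisfying the distributional identity X ~ 1/X + ε with ε ~ Bernoulli(1/2) independent of X, and let a, b be the coefficient-pair arrays of the multi-level recursion. Then for every n ≥ 0, E[log X] = (1/((n+6)·2^n))·E[log(∏_{k=1}^{2^n} (a(n,k)·X + b(n,k)))]. -/
/-!
Write `L(A, B) = E[log (A X + B)]` and `m = E[log X]`. Applying the distributional identity
`X ~ 1/X + ε` to `log (A x + B)` and using `log (A/x + C) = log (C x + A) - log x` gives
`L(B, A) + L(A + B, A) = 2 L(A, B) + 2m`. The pairs `(A + B, A)` and `(B, A)` are exactly the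
coefficient pairs at positions `k` and `2^n + k` of level `n + 1` when `(A, B)` sits at position `k`
of level `n`, so the level sums `S_n = ∑_k L(a(n,k), b(n,k))` satisfy `S_{n+1} = 2 S_n + 2^{n+1} m`.
From `L(1, 0) = m` and `L(0, 1) = 0` the identity gives `L(1, 1) = 4m` and `S_0 = L(2, 1) = 6m`,
hence `S_n = (n + 6) 2^n m`.
-/

open MeasureTheory ProbabilityTheory Real Finset

theorem Finset.sum_Icc_one_add {M : Type*} [AddCommMonoid M] (f : ℕ → M) (m n : ℕ) :
    ∑ k ∈ Icc 1 (m + n), f k = ∑ k ∈ Icc 1 m, f k + ∑ k ∈ Icc 1 n, f (m + k) := by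
  induction n with
  | zero => simp
  | succ n ih =>
    rw [← add_assoc, sum_Icc_succ_top (by omega), ih, sum_Icc_succ_top (by omega), add_assoc,
      add_assoc]

theorem sum_Icc_two_pow_eq_of_split {F : ℕ → ℕ → ℝ} {c : ℝ} (h0 : F 0 1 = 6 * c)
    (hsplit : ∀ n k, 1 ≤ k → k ≤ 2 ^ n → F (n + 1) k + F (n + 1) (2 ^ n + k) = 2 * F n k + 2 * c)
    (n : ℕ) : ∑ k ∈ Icc 1 (2 ^ n), F n k = (n + 6) * 2 ^ n * c := by
  induction n with
  | zero => simp [h0]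
  | succ n ih =>
    rw [pow_succ, mul_two, sum_Icc_one_add, ← sum_add_distrib,
      sum_congr rfl fun k hk => hsplit n k (mem_Icc.1 hk).1 (mem_Icc.1 hk).2, sum_add_distrib,
      ← mul_sum, ih, sum_const, Nat.card_Icc, nsmul_eq_mul]
    push_cast
    ring

structure IsMultilevelCoeffs (a b : ℕ → ℕ → ℕ) : Prop where
  fst_zero : a 0 1 = 2
  snd_zero : b 0 1 = 1
  succ_of_le : ∀ n k, 1 ≤ k → k ≤ 2 ^ n → a (n + 1) k = a n k + b n k ∧ b (n + 1) k = a n k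
  succ_of_gt : ∀ n k, 2 ^ n + 1 ≤ k → k ≤ 2 ^ (n + 1) →
    a (n + 1) k = b n (k - 2 ^ n) ∧ b (n + 1) k = a n (k - 2 ^ n)

theorem IsMultilevelCoeffs.one_le {a b : ℕ → ℕ → ℕ} (h : IsMultilevelCoeffs a b) :
    ∀ n k, 1 ≤ k → k ≤ 2 ^ n → 1 ≤ a n k ∧ 1 ≤ b n k := by
  intro n
  induction n with
  | zero =>
    intro k hk1 hk2
    obtain rfl : k = 1 := by omega
    simp [h.fst_zero, h.snd_zero]
  | succ n ih =>
    intro k hk1 hk2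
    rcases le_or_gt k (2 ^ n) with hk | hk
    · have := ih k hk1 hk
      have := h.succ_of_le n k hk1 hk
      omega
    · have := ih (k - 2 ^ n) (by omega) (by rw [pow_succ] at hk2; omega)
      have := h.succ_of_gt n k hk hk2
      omega

theorem integral_log_prod {Ω ι : Type*} [MeasurableSpace Ω] {μ : Measure Ω} {s : Finset ι}
    {f : ι → Ω → ℝ} (hf : ∀ᵐ ω ∂μ, ∀ i ∈ s, f i ω ≠ 0)
    (hint : ∀ i ∈ s, Integrable (fun ω => log (f i ω)) μ) :
    ∫ ω, log (∏ i ∈ s, f i ω) ∂μ = ∑ i ∈ s, ∫ ω, log (f i ω) ∂μ := by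
  rw [← integral_finsetSum s hint]
  exact integral_congr_ae (hf.mono fun ω hω => log_prod hω)

theorem log_div_add {x A C : ℝ} (hx : x ≠ 0) (h : C * x + A ≠ 0) :
    log (A / x + C) = log (C * x + A) - log x := by
  rw [← log_div h hx]
  congr 1
  field_simp
  ring

section

variable {Ω : Type*} [MeasurableSpace Ω] {μ : Measure Ω} [IsProbabilityMeasure μ]

theorem ae_eq_zero_or_eq_one {ε : Ω → ℝ} (hε : Measurable ε)
    (h0 : μ {ω | ε ω = 0} = 1 / 2) (h1 : μ {ω | ε ω = 1} = 1 / 2) :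
    ∀ᵐ ω ∂μ, ε ω = 0 ∨ ε ω = 1 := by
  have hdisj : Disjoint {ω | ε ω = 0} {ω | ε ω = 1} :=
    Set.disjoint_left.2 fun ω h0 h1 => zero_ne_one (h0.symm.trans h1)
  have hmeas : MeasurableSet {ω | ε ω = 0 ∨ ε ω = 1} :=
    (hε (measurableSet_singleton 0)).union (hε (measurableSet_singleton 1))
  rw [ae_iff, ← Set.compl_ofPred, prob_compl_eq_zero_iff hmeas, Set.ofPred_or,
    measure_union hdisj (hε (measurableSet_singleton 1)), h0, h1, ENNReal.add_halves]

theorem integral_comp_add_of_indepFun_bernoulli {Y ε : Ω → ℝ} (hY : Measurable Y)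
    (hε : Measurable ε) (h0 : μ {ω | ε ω = 0} = 1 / 2) (h1 : μ {ω | ε ω = 1} = 1 / 2)
    (hind : IndepFun Y ε μ) {φ : ℝ → ℝ} (hφ : Measurable φ)
    (hφ0 : Integrable (fun ω => φ (Y ω)) μ) (hφ1 : Integrable (fun ω => φ (Y ω + 1)) μ) :
    ∫ ω, φ (Y ω + ε ω) ∂μ = (∫ ω, φ (Y ω) ∂μ + ∫ ω, φ (Y ω + 1) ∂μ) / 2 := by
  have hindep := (IndepFun_iff_Indep ε Y μ).1 hind.symm
  have hmeas : ∀ c : ℝ, MeasurableSet {ω | ε ω = c} := fun c => hε (measurableSet_singleton c)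
  have heqOn : ∀ c : ℝ, Set.EqOn (fun ω => φ (Y ω + c)) (fun ω => φ (Y ω + ε ω)) {ω | ε ω = c} :=
    fun c ω (hω : ε ω = c) => by simp only [hω]
  have hslice : ∀ c : ℝ, μ {ω | ε ω = c} = 1 / 2 →
      ∫ ω in {ω | ε ω = c}, φ (Y ω + ε ω) ∂μ = (∫ ω, φ (Y ω + c) ∂μ) / 2 := by
    intro c hc
    rw [← setIntegral_congr_fun (hmeas c) (heqOn c),
      hindep.setIntegral_eq_mul (f := fun y => φ (y + c)) (A := {ω | ε ω = c}) hε.comap_le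
        hY.aemeasurable ⟨{c}, measurableSet_singleton c, rfl⟩
        (hφ.comp (measurable_add_const c)).aestronglyMeasurable, measureReal_def, hc]
    simp [div_eq_inv_mul]
  have hdisj : Disjoint {ω | ε ω = 0} {ω | ε ω = 1} :=
    Set.disjoint_left.2 fun ω h0 h1 => zero_ne_one (h0.symm.trans h1)
  have hφ0' : Integrable (fun ω => φ (Y ω + 0)) μ := by simpa only [add_zero] using hφ0
  calc ∫ ω, φ (Y ω + ε ω) ∂μ = ∫ ω in {ω | ε ω = 0} ∪ {ω | ε ω = 1}, φ (Y ω + ε ω) ∂μ := by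
        rw [Measure.restrict_eq_self_of_ae_mem (s := {ω | ε ω = 0} ∪ {ω | ε ω = 1})
          (ae_eq_zero_or_eq_one hε h0 h1)]
    _ = (∫ ω, φ (Y ω + 0) ∂μ + ∫ ω, φ (Y ω + 1) ∂μ) / 2 := by
        rw [setIntegral_union hdisj (hmeas 1) (hφ0'.integrableOn.congr_fun (heqOn 0) (hmeas 0))
          (hφ1.integrableOn.congr_fun (heqOn 1) (hmeas 1)), hslice 0 h0, hslice 1 h1, add_div]
    _ = _ := by simp only [add_zero]

structure IsInvAddBernoulliFixedPoint (μ : Measure Ω) (X ε : Ω → ℝ) : Prop where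
  measurable : Measurable X
  measurable_bernoulli : Measurable ε
  pos : ∀ᵐ ω ∂μ, 0 < X ω
  measure_bernoulli_zero : μ {ω | ε ω = 0} = 1 / 2
  measure_bernoulli_one : μ {ω | ε ω = 1} = 1 / 2
  indepFun : IndepFun X ε μ
  map_eq : μ.map X = μ.map (fun ω => 1 / X ω + ε ω)

namespace IsInvAddBernoulliFixedPoint

variable {X ε : Ω → ℝ}

theorem integral_comp (h : IsInvAddBernoulliFixedPoint μ X ε) {φ : ℝ → ℝ} (hφ : Measurable φ)
    (h0 : Integrable (fun ω => φ (1 / X ω)) μ) (h1 : Integrable (fun ω => φ (1 / X ω + 1)) μ) :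
    ∫ ω, φ (X ω) ∂μ = (∫ ω, φ (1 / X ω) ∂μ + ∫ ω, φ (1 / X ω + 1) ∂μ) / 2 := by
  have hY : Measurable fun ω => 1 / X ω := measurable_const.div h.measurable
  have hZ : Measurable fun ω => 1 / X ω + ε ω := hY.add h.measurable_bernoulli
  rw [← integral_map h.measurable.aemeasurable hφ.aestronglyMeasurable, h.map_eq,
    integral_map hZ.aemeasurable hφ.aestronglyMeasurable]
  exact integral_comp_add_of_indepFun_bernoulli hY h.measurable_bernoulli
    h.measure_bernoulli_zero h.measure_bernoulli_one
    (h.indepFun.comp (measurable_const.div measurable_id) measurable_id) hφ h0 h1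

theorem integral_log_affine (h : IsInvAddBernoulliFixedPoint μ X ε)
    (hlog : Integrable (fun ω => log (X ω)) μ) {A B : ℝ} (hA : 0 < A) (hB : 0 ≤ B)
    (hBA : Integrable (fun ω => log (B * X ω + A)) μ)
    (hABA : Integrable (fun ω => log ((A + B) * X ω + A)) μ) :
    ∫ ω, log (B * X ω + A) ∂μ + ∫ ω, log ((A + B) * X ω + A) ∂μ =
      2 * ∫ ω, log (A * X ω + B) ∂μ + 2 * ∫ ω, log (X ω) ∂μ := by
  have h0 : (fun ω => log (A * (1 / X ω) + B)) =ᵐ[μ] fun ω => log (B * X ω + A) - log (X ω) := by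
    filter_upwards [h.pos] with ω hω
    rw [← log_div_add hω.ne' (by positivity), mul_one_div]
  have h1 : (fun ω => log (A * (1 / X ω + 1) + B)) =ᵐ[μ]
      fun ω => log ((A + B) * X ω + A) - log (X ω) := by
    filter_upwards [h.pos] with ω hω
    rw [← log_div_add hω.ne' (by positivity)]
    ring_nf
  have key := h.integral_comp (φ := fun x => log (A * x + B)) (by fun_prop)
    ((hBA.sub hlog).congr h0.symm) ((hABA.sub hlog).congr h1.symm)
  rw [integral_congr_ae h0, integral_congr_ae h1, integral_sub hBA hlog,
    integral_sub hABA hlog] at key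
  linarith

theorem integral_log_two_mul_add_one (h : IsInvAddBernoulliFixedPoint μ X ε)
    (hlog : Integrable (fun ω => log (X ω)) μ)
    (hint : Integrable (fun ω => log (2 * X ω + 1)) μ) :
    ∫ ω, log (2 * X ω + 1) ∂μ = 6 * ∫ ω, log (X ω) ∂μ := by
  have hint' : Integrable (fun ω => log (X ω + 1)) μ := by
    refine hint.mono (measurable_log.comp (h.measurable.add_const 1)).aestronglyMeasurable ?_
    filter_upwards [h.pos] with ω hω
    rw [norm_of_nonneg (log_nonneg (by linarith)), norm_of_nonneg (log_nonneg (by linarith))]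
    exact log_le_log (by linarith) (by linarith)
  have e1 := h.integral_log_affine hlog one_pos le_rfl (by simp) (by simpa using hint')
  have e2 := h.integral_log_affine hlog one_pos zero_le_one (by simpa using hint')
    (by norm_num; exact hint)
  norm_num at e1 e2
  linarith

theorem integral_log_coeffs_succ (h : IsInvAddBernoulliFixedPoint μ X ε)
    (hlog : Integrable (fun ω => log (X ω)) μ) {a b : ℕ → ℕ → ℕ} (hc : IsMultilevelCoeffs a b)
    (hint : ∀ n k, 1 ≤ k → k ≤ 2 ^ n →
      Integrable (fun ω => log ((a n k : ℝ) * X ω + (b n k : ℝ))) μ)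
    {n k : ℕ} (hk1 : 1 ≤ k) (hk2 : k ≤ 2 ^ n) :
    ∫ ω, log ((a (n + 1) k : ℝ) * X ω + (b (n + 1) k : ℝ)) ∂μ +
        ∫ ω, log ((a (n + 1) (2 ^ n + k) : ℝ) * X ω + (b (n + 1) (2 ^ n + k) : ℝ)) ∂μ =
      2 * ∫ ω, log ((a n k : ℝ) * X ω + (b n k : ℝ)) ∂μ + 2 * ∫ ω, log (X ω) ∂μ := by
  have hk2' : 2 ^ n + k ≤ 2 ^ (n + 1) := by rw [pow_succ]; omega
  obtain ⟨ha₁, hb₁⟩ := hc.succ_of_le n k hk1 hk2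
  obtain ⟨ha₂, hb₂⟩ := hc.succ_of_gt n (2 ^ n + k) (by omega) hk2'
  rw [add_tsub_cancel_left] at ha₂ hb₂
  have hint₁ := hint (n + 1) k hk1 (hk2.trans (Nat.pow_le_pow_right two_pos n.le_succ))
  have hint₂ := hint (n + 1) (2 ^ n + k) (by omega) hk2'
  rw [ha₁, hb₁, Nat.cast_add] at hint₁ ⊢
  rw [ha₂, hb₂] at hint₂ ⊢
  rw [add_comm]
  exact h.integral_log_affine hlog (by exact_mod_cast (hc.one_le n k hk1 hk2).1)
    (Nat.cast_nonneg _) hint₂ hint₁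

end IsInvAddBernoulliFixedPoint

end

/-- For the Bernoulli(1/2) invariant distribution `X ~ 1/X + ε` and the
coefficient-pair arrays `a`, `b` of the multi-level recursion:
`E[log X] = (1/((n+6)·2^n))·E[log(∏_{k=1}^{2^n} (a(n,k)·X + b(n,k)))]` for all `n ≥ 0`. -/
theorem bernoulli_half_multilevel_identity
    {Ω : Type*} [MeasureSpace Ω] [IsProbabilityMeasure (ℙ : Measure Ω)]
    (X ε : Ω → ℝ) (hXm : Measurable X) (hεm : Measurable ε)
    (hXpos : ∀ᵐ ω ∂ℙ, 0 < X ω)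
    (hε1 : ℙ {ω | ε ω = 1} = 1 / 2)
    (hε0 : ℙ {ω | ε ω = 0} = 1 / 2)
    (hindep : IndepFun X ε ℙ)
    (hdist : Measure.map X ℙ = Measure.map (fun ω => 1 / X ω + ε ω) ℙ)
    (a b : ℕ → ℕ → ℕ)
    (ha0 : a 0 1 = 2) (hb0 : b 0 1 = 1)
    (hrec₁ : ∀ n k, 1 ≤ k → k ≤ 2 ^ n →
      a (n + 1) k = a n k + b n k ∧ b (n + 1) k = a n k)
    (hrec₂ : ∀ n k, 2 ^ n + 1 ≤ k → k ≤ 2 ^ (n + 1) →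
      a (n + 1) k = b n (k - 2 ^ n) ∧ b (n + 1) k = a n (k - 2 ^ n))
    (hintX : Integrable (fun ω => Real.log (X ω)) ℙ)
    (hintab : ∀ n k, 1 ≤ k → k ≤ 2 ^ n →
      Integrable (fun ω => Real.log ((a n k : ℝ) * X ω + (b n k : ℝ))) ℙ) :
    ∀ n : ℕ, ∫ ω, Real.log (X ω) ∂ℙ =
      (1 / (((n : ℝ) + 6) * 2 ^ n)) *
        ∫ ω, Real.log (∏ k ∈ Finset.Icc 1 (2 ^ n), ((a n k : ℝ) * X ω + (b n k : ℝ))) ∂ℙ := by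
  intro n
  have hX : IsInvAddBernoulliFixedPoint ℙ X ε := ⟨hXm, hεm, hXpos, hε0, hε1, hindep, hdist⟩
  have hc : IsMultilevelCoeffs a b := ⟨ha0, hb0, hrec₁, hrec₂⟩
  have hbase : ∫ ω, log ((a 0 1 : ℝ) * X ω + (b 0 1 : ℝ)) = 6 * ∫ ω, log (X ω) := by
    have hint := hintab 0 1 le_rfl le_rfl
    simp only [ha0, hb0, Nat.cast_ofNat, Nat.cast_one] at hint ⊢
    exact hX.integral_log_two_mul_add_one hintX hint
  have hsum := sum_Icc_two_pow_eq_of_split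
    (F := fun n k => ∫ ω, log ((a n k : ℝ) * X ω + (b n k : ℝ))) hbase
    (fun n k hk1 hk2 => hX.integral_log_coeffs_succ hintX hc hintab hk1 hk2) n
  have hne : ∀ᵐ ω, ∀ k ∈ Icc 1 (2 ^ n), (a n k : ℝ) * X ω + (b n k : ℝ) ≠ 0 := by
    filter_upwards [hXpos] with ω hω k hk
    have hb : (1 : ℝ) ≤ b n k := by
      exact_mod_cast (hc.one_le n k (mem_Icc.1 hk).1 (mem_Icc.1 hk).2).2
    positivity
  rw [integral_log_prod hne fun k hk => hintab n k (mem_Icc.1 hk).1 (mem_Icc.1 hk).2, hsum]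
  field_simp
end

section
/- Let X be a positive random variable with atomless law satisfying the distributional identity X ~ 1/X + ε with ε ~ Bernoulli(1/2) independent of X, and set p_n = (log c_n)/((n+7)·2^n) and q_n = (log c_n)/((n+4)·2^n), where c_n = ∏_{k=1}^{2^n} (a(n,k) + b(n,k)) with a, b the coefficient-pair arrays of the multi-level recursion. Then lim_{n→∞} p_n = lim_{n→∞} q_n = E[log X]. -/
open MeasureTheory ProbabilityTheory Real Finset Filter

/-!
Write `F A B = E[log (A X + B)]`. Conditioning `X ~ 1/X + ε` on the value of `ε` and using
`log (A / x + B) = log (B x + A) - log x` gives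
`F (A + B) A + F B A = 2 F A B + 2 E[log X]`, and `(A + B, A)`, `(B, A)` are exactly the two
children of `(A, B)` in the recursion. Hence `S n = ∑ₖ F (a n k) (b n k)` satisfies
`S (n + 1) = 2 S n + 2 ^ (n + 1) E[log X]`, so `S n = 2 ^ n (F 2 1 + n E[log X])`. Since
`|log (A + B) - F A B| ≤ E|log X|`, `log c_n` is within `2 ^ n E|log X|` of `S n`, and
`log c_n / ((n + m) 2 ^ n) → E[log X]` for every shift `m`.
-/

lemma abs_log_mul_add_sub_log_add_le {A B x : ℝ} (hA : 0 ≤ A) (hB : 0 ≤ B) (hx : 0 < x) :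
    |log (A * x + B) - log (A + B)| ≤ |log x| := by
  rcases (add_nonneg hA hB).eq_or_lt with hAB | hAB
  · obtain ⟨rfl, rfl⟩ : A = 0 ∧ B = 0 := ⟨by linarith, by linarith⟩
    simp
  rcases le_total 1 x with h | h
  · have hAxB : 0 < A * x + B := by nlinarith
    have hlow : log (A + B) ≤ log (A * x + B) := log_le_log hAB (by nlinarith)
    have hup : log (A * x + B) ≤ log (A + B) + log x := by
      rw [← log_mul hAB.ne' hx.ne']; exact log_le_log hAxB (by nlinarith)
    rw [abs_of_nonneg (log_nonneg h), abs_le]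
    constructor <;> linarith
  · have hAxB : 0 < A * x + B := by nlinarith [mul_pos hAB hx]
    have hlow : log (A + B) + log x ≤ log (A * x + B) := by
      rw [← log_mul hAB.ne' hx.ne']; exact log_le_log (by positivity) (by nlinarith)
    have hup : log (A * x + B) ≤ log (A + B) := log_le_log hAxB (by nlinarith)
    rw [abs_of_nonpos (log_nonpos hx.le h), abs_le]
    constructor <;> linarith

lemma log_mul_one_div_add {A B x : ℝ} (hx : 0 < x) (h : B * x + A ≠ 0) :
    log (A * (1 / x) + B) = log (B * x + A) - log x := by
  rw [← log_div h hx.ne']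
  congr 1
  field_simp
  ring

lemma tendsto_div_add_mul_two_pow {u : ℕ → ℝ} {s I C : ℝ} (m : ℝ)
    (h : ∀ n : ℕ, |u n - 2 ^ n * (s + n * I)| ≤ 2 ^ n * C) :
    Tendsto (fun n : ℕ => u n / ((n + m) * 2 ^ n)) atTop (nhds I) := by
  have hbdd : IsBoundedUnder (· ≤ ·) atTop (norm ∘ fun n : ℕ => u n / 2 ^ n - (s + n * I)) := by
    refine isBoundedUnder_of ⟨C, fun n => ?_⟩
    have h2 : (0 : ℝ) < 2 ^ n := by positivity
    have hscale : u n / 2 ^ n - (s + n * I) = (u n - 2 ^ n * (s + n * I)) / 2 ^ n := by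
      field_simp
    rw [Function.comp_apply, norm_eq_abs, hscale, abs_div, abs_of_pos h2, div_le_iff₀' h2]
    exact h n
  have hinv : Tendsto (fun n : ℕ => ((n : ℝ) + m)⁻¹) atTop (nhds 0) :=
    tendsto_inv_atTop_zero.comp (tendsto_atTop_add_const_right _ m tendsto_natCast_atTop_atTop)
  have hmain := (isBoundedUnder_le_mul_tendsto_zero hbdd hinv).add
    (tendsto_add_mul_div_add_mul_atTop_nhds s m I one_ne_zero)
  rw [zero_add, div_one] at hmain
  refine hmain.congr fun n => ?_
  simp only [div_eq_mul_inv, mul_inv, one_mul]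
  ring

section Bernoulli

variable {Ω : Type*} [MeasurableSpace Ω] {μ : Measure Ω}

lemma ProbabilityTheory.IndepFun.integral_indicator_preimage_singleton {α β : Type*}
    [MeasurableSpace α] [MeasurableSpace β] [MeasurableSingletonClass β] {Y : Ω → α} {ε : Ω → β}
    (hY : Measurable Y) (hε : Measurable ε) (hindep : IndepFun Y ε μ) {f : α → ℝ}
    (hf : Measurable f) (e : β) :
    ∫ ω, {ω | ε ω = e}.indicator (fun ω => f (Y ω)) ω ∂μ
      = μ.real {ω | ε ω = e} * ∫ ω, f (Y ω) ∂μ := by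
  have hprod : ∀ ω, {ω | ε ω = e}.indicator (fun ω => f (Y ω)) ω
      = f (Y ω) * ({e} : Set β).indicator 1 (ε ω) := by
    intro ω
    by_cases h : ε ω = e <;> simp [Set.indicator, h]
  simp_rw [hprod]
  rw [hindep.integral_fun_comp_mul_comp hY.aemeasurable hε.aemeasurable hf.aestronglyMeasurable
    (measurable_one.indicator (measurableSet_singleton e)).aestronglyMeasurable, mul_comm]
  congr 1
  exact integral_indicator_one (hε (measurableSet_singleton e))

lemma ae_eq_zero_or_eq_one_of_measure_eq_half [IsProbabilityMeasure μ] {ε : Ω → ℝ}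
    (hε : Measurable ε) (hε0 : μ {ω | ε ω = 0} = 1 / 2) (hε1 : μ {ω | ε ω = 1} = 1 / 2) :
    ∀ᵐ ω ∂μ, ε ω = 0 ∨ ε ω = 1 := by
  have hs0 : MeasurableSet {ω | ε ω = 0} := hε (measurableSet_singleton 0)
  have hs1 : MeasurableSet {ω | ε ω = 1} := hε (measurableSet_singleton 1)
  have hdisj : Disjoint {ω | ε ω = 0} {ω | ε ω = 1} :=
    Set.disjoint_left.2 fun ω (h0 : ε ω = 0) (h1 : ε ω = 1) => by simp [h0] at h1
  have hunion : μ ({ω | ε ω = 0} ∪ {ω | ε ω = 1}) = 1 := by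
    rw [measure_union hdisj hs1, hε0, hε1, ENNReal.add_halves]
  exact ae_iff_measure_eq (hs0.union hs1).nullMeasurableSet |>.2 (hunion.trans measure_univ.symm)

variable [IsProbabilityMeasure μ]

lemma integral_comp_add_of_measure_eq_half {Y ε : Ω → ℝ} (hY : Measurable Y) (hε : Measurable ε)
    (hε0 : μ {ω | ε ω = 0} = 1 / 2) (hε1 : μ {ω | ε ω = 1} = 1 / 2) (hindep : IndepFun Y ε μ)
    {g : ℝ → ℝ} (hg : Measurable g) (h0 : Integrable (fun ω => g (Y ω)) μ)
    (h1 : Integrable (fun ω => g (Y ω + 1)) μ) :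
    ∫ ω, g (Y ω + ε ω) ∂μ = (∫ ω, g (Y ω) ∂μ + ∫ ω, g (Y ω + 1) ∂μ) / 2 := by
  have hsplit : (fun ω => g (Y ω + ε ω)) =ᵐ[μ] fun ω =>
      {ω | ε ω = 0}.indicator (fun ω => g (Y ω)) ω
        + {ω | ε ω = 1}.indicator (fun ω => g (Y ω + 1)) ω := by
    filter_upwards [ae_eq_zero_or_eq_one_of_measure_eq_half hε hε0 hε1] with ω hω
    rcases hω with h | h <;> simp [Set.indicator, h]
  have hs0 : MeasurableSet {ω | ε ω = 0} := hε (measurableSet_singleton 0)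
  have hs1 : MeasurableSet {ω | ε ω = 1} := hε (measurableSet_singleton 1)
  rw [integral_congr_ae hsplit, integral_add (h0.indicator hs0) (h1.indicator hs1),
    hindep.integral_indicator_preimage_singleton hY hε hg,
    hindep.integral_indicator_preimage_singleton hY hε (f := fun y => g (y + 1))
      (hg.comp (measurable_add_const 1)),
    measureReal_def, measureReal_def, hε0, hε1]
  simp only [one_div, ENNReal.toReal_inv, ENNReal.toReal_ofNat]
  ring

lemma integral_log_mul_add_eq {X ε : Ω → ℝ} (hX : Measurable X) (hε : Measurable ε)
    (hXpos : ∀ᵐ ω ∂μ, 0 < X ω) (hε0 : μ {ω | ε ω = 0} = 1 / 2) (hε1 : μ {ω | ε ω = 1} = 1 / 2)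
    (hindep : IndepFun X ε μ) (hdist : μ.map X = μ.map (fun ω => 1 / X ω + ε ω))
    {A B : ℝ} (hA : 0 < A) (hB : 0 ≤ B) (hlogX : Integrable (fun ω => log (X ω)) μ)
    (hBA : Integrable (fun ω => log (B * X ω + A)) μ)
    (hABA : Integrable (fun ω => log ((A + B) * X ω + A)) μ) :
    ∫ ω, log (A * X ω + B) ∂μ
      = (∫ ω, log (B * X ω + A) ∂μ + ∫ ω, log ((A + B) * X ω + A) ∂μ) / 2
        - ∫ ω, log (X ω) ∂μ := by
  set g : ℝ → ℝ := fun y => log (A * y + B)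
  have hg : Measurable g := measurable_log.comp ((measurable_id.const_mul A).add_const B)
  have hinv : Measurable fun ω => 1 / X ω := measurable_const.div hX
  have hY : Measurable fun ω => 1 / X ω + ε ω := hinv.add hε
  have h0 : (fun ω => g (1 / X ω)) =ᵐ[μ] fun ω => log (B * X ω + A) - log (X ω) := by
    filter_upwards [hXpos] with ω hx
    exact log_mul_one_div_add hx (by positivity)
  have h1 : (fun ω => g (1 / X ω + 1)) =ᵐ[μ] fun ω => log ((A + B) * X ω + A) - log (X ω) := by
    filter_upwards [hXpos] with ω hx
    show log (A * (1 / X ω + 1) + B) = _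
    rw [show A * (1 / X ω + 1) + B = A * (1 / X ω) + (A + B) by ring]
    exact log_mul_one_div_add hx (by positivity)
  calc ∫ ω, log (A * X ω + B) ∂μ = ∫ ω, g (1 / X ω + ε ω) ∂μ := by
        rw [← integral_map hX.aemeasurable hg.aestronglyMeasurable, hdist,
          integral_map hY.aemeasurable hg.aestronglyMeasurable]
    _ = (∫ ω, g (1 / X ω) ∂μ + ∫ ω, g (1 / X ω + 1) ∂μ) / 2 :=
        integral_comp_add_of_measure_eq_half hinv hε hε0 hε1
          (hindep.comp (measurable_const.div measurable_id) measurable_id) hg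
          ((hBA.sub hlogX).congr h0.symm) ((hABA.sub hlogX).congr h1.symm)
    _ = _ := by
        rw [integral_congr_ae h0, integral_congr_ae h1, integral_sub hBA hlogX,
          integral_sub hABA hlogX]
        ring

lemma abs_log_add_sub_integral_log_mul_add_le {X : Ω → ℝ} (hXpos : ∀ᵐ ω ∂μ, 0 < X ω)
    {A B : ℝ} (hA : 0 ≤ A) (hB : 0 ≤ B) (hlogX : Integrable (fun ω => log (X ω)) μ)
    (hint : Integrable (fun ω => log (A * X ω + B)) μ) :
    |log (A + B) - ∫ ω, log (A * X ω + B) ∂μ| ≤ ∫ ω, |log (X ω)| ∂μ :=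
  calc |log (A + B) - ∫ ω, log (A * X ω + B) ∂μ|
      = |∫ ω, (log (A * X ω + B) - log (A + B)) ∂μ| := by
        rw [integral_sub hint (integrable_const _), integral_const, probReal_univ, one_smul,
          abs_sub_comm]
    _ ≤ ∫ ω, |log (A * X ω + B) - log (A + B)| ∂μ := abs_integral_le_integral_abs
    _ ≤ ∫ ω, |log (X ω)| ∂μ := integral_mono_ae (hint.sub (integrable_const _)).abs hlogX.abs
        (by filter_upwards [hXpos] with ω hx using abs_log_mul_add_sub_log_add_le hA hB hx)

end Bernoulli

lemma Finset.sum_Icc_one_two_pow_succ {M : Type*} [AddCommMonoid M] (f : ℕ → M) (n : ℕ) :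
    ∑ k ∈ Icc 1 (2 ^ (n + 1)), f k = ∑ k ∈ Icc 1 (2 ^ n), (f k + f (2 ^ n + k)) := by
  have hsplit :
      Icc 1 (2 ^ (n + 1)) = Icc 1 (2 ^ n) ∪ (Icc 1 (2 ^ n)).map (addLeftEmbedding (2 ^ n)) := by
    ext k
    simp only [mem_union, mem_Icc, mem_map, addLeftEmbedding_apply]
    constructor
    · intro hk
      by_cases h : k ≤ 2 ^ n
      · exact Or.inl ⟨hk.1, h⟩
      · exact Or.inr ⟨k - 2 ^ n, by omega⟩
    · rintro (hk | ⟨j, hj, rfl⟩) <;> constructor <;> omega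
  have hdisj : Disjoint (Icc 1 (2 ^ n)) ((Icc 1 (2 ^ n)).map (addLeftEmbedding (2 ^ n))) := by
    simp only [disjoint_left, mem_Icc, mem_map, addLeftEmbedding_apply]
    omega
  rw [hsplit, sum_union hdisj, sum_map, sum_add_distrib]
  rfl

structure IsPairRecursion (a b : ℕ → ℕ → ℕ) : Prop where
  lower : ∀ n k, 1 ≤ k → k ≤ 2 ^ n → a (n + 1) k = a n k + b n k ∧ b (n + 1) k = a n k
  upper : ∀ n k, 2 ^ n + 1 ≤ k → k ≤ 2 ^ (n + 1) →
    a (n + 1) k = b n (k - 2 ^ n) ∧ b (n + 1) k = a n (k - 2 ^ n)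

namespace IsPairRecursion

variable {a b : ℕ → ℕ → ℕ}

lemma upper_add (h : IsPairRecursion a b) {n k : ℕ} (hk₁ : 1 ≤ k) (hk₂ : k ≤ 2 ^ n) :
    a (n + 1) (2 ^ n + k) = b n k ∧ b (n + 1) (2 ^ n + k) = a n k := by
  have := h.upper n (2 ^ n + k) (by omega) (by rw [pow_succ]; omega)
  rwa [Nat.add_sub_cancel_left] at this

lemma pos (h : IsPairRecursion a b) (ha : 0 < a 0 1) (hb : 0 < b 0 1) :
    ∀ n k, 1 ≤ k → k ≤ 2 ^ n → 0 < a n k ∧ 0 < b n k := by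
  intro n
  induction n with
  | zero =>
    intro k hk₁ hk₂
    obtain rfl : k = 1 := by rw [pow_zero] at hk₂; omega
    exact ⟨ha, hb⟩
  | succ n ih =>
    intro k hk₁ hk₂
    by_cases hk : k ≤ 2 ^ n
    · rw [(h.lower n k hk₁ hk).1, (h.lower n k hk₁ hk).2]
      have := ih k hk₁ hk
      omega
    · obtain ⟨j, rfl⟩ : ∃ j, k = 2 ^ n + j := ⟨k - 2 ^ n, by omega⟩
      have hj : j ≤ 2 ^ n := by rw [pow_succ] at hk₂; omega
      rw [(h.upper_add (by omega) hj).1, (h.upper_add (by omega) hj).2]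
      exact (ih j (by omega) hj).symm

lemma sum_succ (h : IsPairRecursion a b) {M : Type*} [AddCommMonoid M] (F : ℕ → ℕ → M) (n : ℕ) :
    ∑ k ∈ Icc 1 (2 ^ (n + 1)), F (a (n + 1) k) (b (n + 1) k)
      = ∑ k ∈ Icc 1 (2 ^ n), (F (a n k + b n k) (a n k) + F (b n k) (a n k)) := by
  rw [sum_Icc_one_two_pow_succ]
  refine sum_congr rfl fun k hk => ?_
  rw [mem_Icc] at hk
  rw [(h.lower n k hk.1 hk.2).1, (h.lower n k hk.1 hk.2).2, (h.upper_add hk.1 hk.2).1,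
    (h.upper_add hk.1 hk.2).2]

lemma sum_eq (h : IsPairRecursion a b) (F : ℕ → ℕ → ℝ) (I : ℝ)
    (hF : ∀ n k, 1 ≤ k → k ≤ 2 ^ n →
      F (a n k + b n k) (a n k) + F (b n k) (a n k) = 2 * F (a n k) (b n k) + 2 * I) (n : ℕ) :
    ∑ k ∈ Icc 1 (2 ^ n), F (a n k) (b n k) = 2 ^ n * (F (a 0 1) (b 0 1) + n * I) := by
  induction n with
  | zero => simp
  | succ n ih =>
    rw [h.sum_succ, sum_congr rfl fun k hk => hF n k (mem_Icc.1 hk).1 (mem_Icc.1 hk).2,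
      sum_add_distrib, ← mul_sum, ih, sum_const, Nat.card_Icc, nsmul_eq_mul]
    push_cast
    ring

lemma abs_log_prod_sub_le (h : IsPairRecursion a b) (ha : 0 < a 0 1) (hb : 0 < b 0 1)
    {F : ℕ → ℕ → ℝ} {I C : ℝ}
    (hF : ∀ n k, 1 ≤ k → k ≤ 2 ^ n →
      F (a n k + b n k) (a n k) + F (b n k) (a n k) = 2 * F (a n k) (b n k) + 2 * I)
    (hC : ∀ n k, 1 ≤ k → k ≤ 2 ^ n → |log (a n k + b n k) - F (a n k) (b n k)| ≤ C) (n : ℕ) :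
    |log (∏ k ∈ Icc 1 (2 ^ n), (a n k + b n k) : ℕ) - 2 ^ n * (F (a 0 1) (b 0 1) + n * I)|
      ≤ 2 ^ n * C := by
  have hne : ∀ k ∈ Icc 1 (2 ^ n), ((a n k : ℝ) + b n k) ≠ 0 := fun k hk => by
    have ⟨ha', hb'⟩ := h.pos ha hb n k (mem_Icc.1 hk).1 (mem_Icc.1 hk).2
    positivity
  rw [← h.sum_eq F I hF, Nat.cast_prod]
  simp_rw [Nat.cast_add]
  rw [log_prod hne, ← sum_sub_distrib]
  calc _ ≤ ∑ k ∈ Icc 1 (2 ^ n), |log (a n k + b n k) - F (a n k) (b n k)| :=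
        abs_sum_le_sum_abs _ _
    _ ≤ ∑ k ∈ Icc 1 (2 ^ n), C :=
        sum_le_sum fun k hk => hC n k (mem_Icc.1 hk).1 (mem_Icc.1 hk).2
    _ = 2 ^ n * C := by simp

end IsPairRecursion

theorem bernoulli_half_bounds_converge_general
    {Ω : Type*} [MeasureSpace Ω] [IsProbabilityMeasure (ℙ : Measure Ω)]
    (X ε : Ω → ℝ) (hXm : Measurable X) (hεm : Measurable ε)
    (hXpos : ∀ᵐ ω ∂ℙ, 0 < X ω)
    (hε1 : ℙ {ω | ε ω = 1} = 1 / 2)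
    (hε0 : ℙ {ω | ε ω = 0} = 1 / 2)
    (hindep : IndepFun X ε ℙ)
    (hdist : Measure.map X ℙ = Measure.map (fun ω => 1 / X ω + ε ω) ℙ)
    (a b : ℕ → ℕ → ℕ)
    (ha0 : a 0 1 = 2) (hb0 : b 0 1 = 1)
    (hrec₁ : ∀ n k, 1 ≤ k → k ≤ 2 ^ n →
      a (n + 1) k = a n k + b n k ∧ b (n + 1) k = a n k)
    (hrec₂ : ∀ n k, 2 ^ n + 1 ≤ k → k ≤ 2 ^ (n + 1) →
      a (n + 1) k = b n (k - 2 ^ n) ∧ b (n + 1) k = a n (k - 2 ^ n))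
    (c : ℕ → ℕ)
    (hc : ∀ n, c n = ∏ k ∈ Finset.Icc 1 (2 ^ n), (a n k + b n k))
    (hintX : Integrable (fun ω => Real.log (X ω)) ℙ)
    (hintab : ∀ n k, 1 ≤ k → k ≤ 2 ^ n →
      Integrable (fun ω => Real.log ((a n k : ℝ) * X ω + (b n k : ℝ))) ℙ) :
    Tendsto (fun n : ℕ => Real.log (c n) / (((n : ℝ) + 7) * 2 ^ n)) atTop
      (nhds (∫ ω, Real.log (X ω) ∂ℙ)) ∧
    Tendsto (fun n : ℕ => Real.log (c n) / (((n : ℝ) + 4) * 2 ^ n)) atTop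
      (nhds (∫ ω, Real.log (X ω) ∂ℙ)) := by
  have hab : IsPairRecursion a b := ⟨hrec₁, hrec₂⟩
  set F : ℕ → ℕ → ℝ := fun A B => ∫ ω, log (A * X ω + B) ∂ℙ
  have hF : ∀ n k, 1 ≤ k → k ≤ 2 ^ n → F (a n k + b n k) (a n k) + F (b n k) (a n k)
      = 2 * F (a n k) (b n k) + 2 * ∫ ω, log (X ω) ∂ℙ := by
    intro n k hk₁ hk₂
    have hlower := hintab (n + 1) k hk₁ (by rw [pow_succ]; omega)
    have hupper := hintab (n + 1) (2 ^ n + k) (by omega) (by rw [pow_succ]; omega)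
    rw [(hab.lower n k hk₁ hk₂).1, (hab.lower n k hk₁ hk₂).2, Nat.cast_add] at hlower
    rw [(hab.upper_add hk₁ hk₂).1, (hab.upper_add hk₁ hk₂).2] at hupper
    have hA : (0 : ℝ) < a n k := Nat.cast_pos.2 (hab.pos (by omega) (by omega) n k hk₁ hk₂).1
    have := integral_log_mul_add_eq hXm hεm hXpos hε0 hε1 hindep hdist hA (Nat.cast_nonneg _)
      hintX hupper hlower
    simp only [F, Nat.cast_add]
    linarith
  have hbound := hab.abs_log_prod_sub_le (by omega) (by omega) hF fun n k hk₁ hk₂ =>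
    abs_log_add_sub_integral_log_mul_add_le hXpos (Nat.cast_nonneg _) (Nat.cast_nonneg _) hintX
      (hintab n k hk₁ hk₂)
  simp_rw [← hc] at hbound
  exact ⟨tendsto_div_add_mul_two_pow 7 hbound, tendsto_div_add_mul_two_pow 4 hbound⟩

/-- The bounds `p_n = (log c_n)/((n+7)·2^n)` and `q_n = (log c_n)/((n+4)·2^n)`
both converge to `E[log X]` as `n → ∞` for the Bernoulli(1/2) model. -/
theorem bernoulli_half_bounds_converge
    {Ω : Type*} [MeasureSpace Ω] [IsProbabilityMeasure (ℙ : Measure Ω)]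
    (X ε : Ω → ℝ) (hXm : Measurable X) (hεm : Measurable ε)
    (hXpos : ∀ᵐ ω ∂ℙ, 0 < X ω)
    (hatomless : ∀ x : ℝ, ℙ {ω | X ω = x} = 0)
    (hε1 : ℙ {ω | ε ω = 1} = 1 / 2)
    (hε0 : ℙ {ω | ε ω = 0} = 1 / 2)
    (hindep : IndepFun X ε ℙ)
    (hdist : Measure.map X ℙ = Measure.map (fun ω => 1 / X ω + ε ω) ℙ)
    (a b : ℕ → ℕ → ℕ)
    (ha0 : a 0 1 = 2) (hb0 : b 0 1 = 1)
    (hrec₁ : ∀ n k, 1 ≤ k → k ≤ 2 ^ n →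
      a (n + 1) k = a n k + b n k ∧ b (n + 1) k = a n k)
    (hrec₂ : ∀ n k, 2 ^ n + 1 ≤ k → k ≤ 2 ^ (n + 1) →
      a (n + 1) k = b n (k - 2 ^ n) ∧ b (n + 1) k = a n (k - 2 ^ n))
    (c : ℕ → ℕ)
    (hc : ∀ n, c n = ∏ k ∈ Finset.Icc 1 (2 ^ n), (a n k + b n k))
    (hintX : Integrable (fun ω => Real.log (X ω)) ℙ)
    (hintab : ∀ n k, 1 ≤ k → k ≤ 2 ^ n →
      Integrable (fun ω => Real.log ((a n k : ℝ) * X ω + (b n k : ℝ))) ℙ) :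
    Tendsto (fun n : ℕ => Real.log (c n) / (((n : ℝ) + 7) * 2 ^ n)) atTop
      (nhds (∫ ω, Real.log (X ω) ∂ℙ)) ∧
    Tendsto (fun n : ℕ => Real.log (c n) / (((n : ℝ) + 4) * 2 ^ n)) atTop
      (nhds (∫ ω, Real.log (X ω) ∂ℙ)) :=
  bernoulli_half_bounds_converge_general X ε hXm hεm hXpos hε1 hε0 hindep hdist a b ha0 hb0 hrec₁
    hrec₂ c hc hintX hintab
end

section
/- Let a, b be the coefficient-pair arrays of the multi-level recursion. Then for every n ≥ 0 and every k with 1 ≤ k ≤ 2^n, the first coefficient pair of row n dominates: a(n,1) ≥ a(n,k) and b(n,1) ≥ b(n,k). -/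
def FirstPairDominates (a b : ℕ → ℕ → ℕ) (n : ℕ) : Prop :=
  ∀ k, 1 ≤ k → k ≤ 2 ^ n → a n k ≤ a n 1 ∧ b n k ≤ b n 1

theorem firstPairDominates_zero (a b : ℕ → ℕ → ℕ) : FirstPairDominates a b 0 := by
  intro k hk₁ hk₂
  obtain rfl : k = 1 := by simp at hk₂; omega
  exact ⟨le_rfl, le_rfl⟩

section Step

variable {a b : ℕ → ℕ → ℕ} {n : ℕ}
  (hrec₁ : ∀ n k, 1 ≤ k → k ≤ 2 ^ n →
    a (n + 1) k = a n k + b n k ∧ b (n + 1) k = a n k)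
  (hrec₂ : ∀ n k, 2 ^ n + 1 ≤ k → k ≤ 2 ^ (n + 1) →
    a (n + 1) k = b n (k - 2 ^ n) ∧ b (n + 1) k = a n (k - 2 ^ n))
include hrec₁

theorem FirstPairDominates.succ_left (h : FirstPairDominates a b n) {k : ℕ}
    (hk₁ : 1 ≤ k) (hk₂ : k ≤ 2 ^ n) :
    a (n + 1) k ≤ a (n + 1) 1 ∧ b (n + 1) k ≤ b (n + 1) 1 := by
  obtain ⟨ha₁, hb₁⟩ := hrec₁ n 1 le_rfl Nat.one_le_two_pow
  obtain ⟨hak, hbk⟩ := hrec₁ n k hk₁ hk₂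
  obtain ⟨ha, hb⟩ := h k hk₁ hk₂
  rw [hak, hbk, ha₁, hb₁]
  exact ⟨Nat.add_le_add ha hb, ha⟩

include hrec₂

theorem FirstPairDominates.succ_right (h : FirstPairDominates a b n) {k : ℕ}
    (hk₁ : 2 ^ n + 1 ≤ k) (hk₂ : k ≤ 2 ^ (n + 1)) :
    a (n + 1) k ≤ a (n + 1) 1 ∧ b (n + 1) k ≤ b (n + 1) 1 := by
  obtain ⟨ha₁, hb₁⟩ := hrec₁ n 1 le_rfl Nat.one_le_two_pow
  obtain ⟨hak, hbk⟩ := hrec₂ n k hk₁ hk₂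
  have hj₂ : k - 2 ^ n ≤ 2 ^ n := by rw [pow_succ] at hk₂; omega
  obtain ⟨ha, hb⟩ := h (k - 2 ^ n) (by omega) hj₂
  rw [hak, hbk, ha₁, hb₁]
  exact ⟨hb.trans (Nat.le_add_left _ _), ha⟩

theorem FirstPairDominates.succ (h : FirstPairDominates a b n) :
    FirstPairDominates a b (n + 1) := by
  intro k hk₁ hk₂
  rcases le_or_gt k (2 ^ n) with hleft | hright
  · exact h.succ_left hrec₁ hk₁ hleft
  · exact h.succ_right hrec₁ hrec₂ hright hk₂

end Step

theorem multilevel_first_pair_dominates_general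
    (a b : ℕ → ℕ → ℕ)
    (hrec₁ : ∀ n k, 1 ≤ k → k ≤ 2 ^ n →
      a (n + 1) k = a n k + b n k ∧ b (n + 1) k = a n k)
    (hrec₂ : ∀ n k, 2 ^ n + 1 ≤ k → k ≤ 2 ^ (n + 1) →
      a (n + 1) k = b n (k - 2 ^ n) ∧ b (n + 1) k = a n (k - 2 ^ n)) :
    ∀ n k, 1 ≤ k → k ≤ 2 ^ n → a n k ≤ a n 1 ∧ b n k ≤ b n 1 := by
  intro n
  induction n with
  | zero => exact firstPairDominates_zero a b
  | succ n ih => exact FirstPairDominates.succ hrec₁ hrec₂ ih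

/-- The first coefficient pair of each row of the multi-level recursion dominates
the other pairs in that row: `a(n,1) ≥ a(n,k)` and `b(n,1) ≥ b(n,k)` for `1 ≤ k ≤ 2^n`. -/
theorem multilevel_first_pair_dominates
    (a b : ℕ → ℕ → ℕ)
    (ha0 : a 0 1 = 2) (hb0 : b 0 1 = 1)
    (hrec₁ : ∀ n k, 1 ≤ k → k ≤ 2 ^ n →
      a (n + 1) k = a n k + b n k ∧ b (n + 1) k = a n k)
    (hrec₂ : ∀ n k, 2 ^ n + 1 ≤ k → k ≤ 2 ^ (n + 1) →
      a (n + 1) k = b n (k - 2 ^ n) ∧ b (n + 1) k = a n (k - 2 ^ n)) :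
    ∀ n k, 1 ≤ k → k ≤ 2 ^ n → a n k ≤ a n 1 ∧ b n k ≤ b n 1 :=
  multilevel_first_pair_dominates_general a b hrec₁ hrec₂
end

section
/- Let a, b be the coefficient-pair arrays of the multi-level recursion, set c_n = ∏_{k=1}^{2^n} (a(n,k) + b(n,k)), and let F_n denote the Fibonacci numbers with F_0 = 0, F_1 = 1. Then c_n ≤ (F_{n+4})^{2^n} for all n ≥ 0. -/
open Finset

/-- Induction on the level: the bounds `(F_{n+3}, F_{n+2})` pass to `(F_{n+3} + F_{n+2}, F_{n+3})`
in the first half and, since `F_{n+2} ≤ F_{n+3}`, survive the swap in the second half. -/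
theorem multilevel_le_fib {a b : ℕ → ℕ → ℕ}
    (ha0 : a 0 1 = 2) (hb0 : b 0 1 = 1)
    (hrec₁ : ∀ n k, 1 ≤ k → k ≤ 2 ^ n →
      a (n + 1) k = a n k + b n k ∧ b (n + 1) k = a n k)
    (hrec₂ : ∀ n k, 2 ^ n + 1 ≤ k → k ≤ 2 ^ (n + 1) →
      a (n + 1) k = b n (k - 2 ^ n) ∧ b (n + 1) k = a n (k - 2 ^ n))
    (n k : ℕ) (hk₁ : 1 ≤ k) (hk₂ : k ≤ 2 ^ n) :
    a n k ≤ Nat.fib (n + 3) ∧ b n k ≤ Nat.fib (n + 2) := by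
  induction n generalizing k with
  | zero =>
    obtain rfl : k = 1 := by simp at hk₂; omega
    simp [ha0, hb0, Nat.fib_add_two]
  | succ m ih =>
    show a (m + 1) k ≤ Nat.fib (m + 4) ∧ b (m + 1) k ≤ Nat.fib (m + 3)
    have hfib : Nat.fib (m + 4) = Nat.fib (m + 2) + Nat.fib (m + 3) := Nat.fib_add_two
    have hmono : Nat.fib (m + 2) ≤ Nat.fib (m + 3) := Nat.fib_mono (by omega)
    rcases le_or_gt k (2 ^ m) with hfirst | hsecond
    · obtain ⟨ha, hb⟩ := hrec₁ m k hk₁ hfirst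
      obtain ⟨iha, ihb⟩ := ih k hk₁ hfirst
      constructor <;> omega
    · obtain ⟨ha, hb⟩ := hrec₂ m k hsecond hk₂
      obtain ⟨iha, ihb⟩ := ih (k - 2 ^ m) (by omega) (by rw [pow_succ] at hk₂; omega)
      constructor <;> omega

/-- The crude estimate `c_n ≤ (F_{n+4})^{2^n}` where
`c_n = ∏_{k=1}^{2^n} (a(n,k) + b(n,k))` and `F` is the Fibonacci sequence. -/
theorem multilevel_c_le_fib_pow
    (a b : ℕ → ℕ → ℕ)
    (ha0 : a 0 1 = 2) (hb0 : b 0 1 = 1)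
    (hrec₁ : ∀ n k, 1 ≤ k → k ≤ 2 ^ n →
      a (n + 1) k = a n k + b n k ∧ b (n + 1) k = a n k)
    (hrec₂ : ∀ n k, 2 ^ n + 1 ≤ k → k ≤ 2 ^ (n + 1) →
      a (n + 1) k = b n (k - 2 ^ n) ∧ b (n + 1) k = a n (k - 2 ^ n))
    (c : ℕ → ℕ)
    (hc : ∀ n, c n = ∏ k ∈ Finset.Icc 1 (2 ^ n), (a n k + b n k)) :
    ∀ n : ℕ, c n ≤ Nat.fib (n + 4) ^ 2 ^ n := by
  intro n
  have hfactor : ∀ k ∈ Icc 1 (2 ^ n), a n k + b n k ≤ Nat.fib (n + 4) := by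
    intro k hk
    obtain ⟨hk₁, hk₂⟩ := mem_Icc.mp hk
    obtain ⟨ha, hb⟩ := multilevel_le_fib ha0 hb0 hrec₁ hrec₂ n k hk₁ hk₂
    have hfib : Nat.fib (n + 4) = Nat.fib (n + 2) + Nat.fib (n + 3) := Nat.fib_add_two
    omega
  calc c n = ∏ k ∈ Icc 1 (2 ^ n), (a n k + b n k) := hc n
    _ ≤ Nat.fib (n + 4) ^ #(Icc 1 (2 ^ n)) := prod_le_pow_card _ _ _ hfactor
    _ = Nat.fib (n + 4) ^ 2 ^ n := by simp
end
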